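/- arXiv:2003.07248 — 6 statements merged into one kernel-verified Lean document; each statement's English description precedes it below -/
import Mathlib

section
/- If for all valid indices the jitter cross-differences Δ12(n,m) = ε2(m) - ε1(n) are pairwise distinct (i.e., Δ12(n1,m1) ≠ Δ12(n2,m2) whenever (n1,m1) ≠ (n2,m2)), then the perturbed cross-difference set L⁺ = {Mn + ε1(n) - Nm - ε2(m) : 0 ≤ n ≤ rN-1, 0 ≤ m ≤ rM-1} has exactly r²MN distinct elements. -/
/-- if the jitter cross-differences `Δ₁₂(n,m) = ε₂(m) - ε₁(n)` are pairwise
distinct, then the perturbed cross-difference set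
`L⁺ = {Mn + ε₁(n) - Nm - ε₂(m)}` has exactly `r²MN` distinct elements. -/
theorem stmt1 (M N r : ℕ) (hM : 0 < M) (hN : 0 < N) (hr : 0 < r)
    (hcop : Nat.Coprime M N)
    (ε1 ε2 : ℕ → ℝ)
    (hε1 : ∀ n < r * N, |ε1 n| < 1/4)
    (hε2 : ∀ m < r * M, |ε2 m| < 1/4)
    (hΔ : ∀ n1 m1 n2 m2, n1 < r * N → n2 < r * N → m1 < r * M → m2 < r * M →
      (n1, m1) ≠ (n2, m2) → ε2 m1 - ε1 n1 ≠ ε2 m2 - ε1 n2) :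
    (((Finset.range (r * N)) ×ˢ (Finset.range (r * M))).image
        (fun p => (M : ℝ) * p.1 + ε1 p.1 - (N : ℝ) * p.2 - ε2 p.2)).card
      = r ^ 2 * M * N := by
  rw [Finset.card_image_of_injOn, Finset.card_product, Finset.card_range,
    Finset.card_range]
  · ring
  · rintro ⟨n1, m1⟩ hp1 ⟨n2, m2⟩ hp2 heq
    simp only [Finset.coe_product, Set.mem_prod, Finset.mem_coe, Finset.mem_range] at hp1 hp2
    obtain ⟨hn1, hm1⟩ := hp1
    obtain ⟨hn2, hm2⟩ := hp2
    have heq' : (M:ℝ)*n1 + ε1 n1 - (N:ℝ)*m1 - ε2 m1 = (M:ℝ)*n2 + ε1 n2 - (N:ℝ)*m2 - ε2 m2 := heq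
    by_contra hne
    apply hΔ n1 m1 n2 m2 hn1 hn2 hm1 hm2 hne
    have h1 := hε1 n1 hn1
    have h2 := hε1 n2 hn2
    have h3 := hε2 m1 hm1
    have h4 := hε2 m2 hm2
    have key : (((M : ℤ) * n1 - N * m1 - M * n2 + N * m2 : ℤ) : ℝ)
        = (ε2 m1 - ε1 n1) - (ε2 m2 - ε1 n2) := by
      push_cast
      linarith [heq']
    have habs : |(((M : ℤ) * n1 - N * m1 - M * n2 + N * m2 : ℤ) : ℝ)| < 1 := by
      rw [key]
      rw [abs_lt] at h1 h2 h3 h4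
      rw [abs_lt]
      constructor <;> linarith
    have hz : ((M : ℤ) * n1 - N * m1 - M * n2 + N * m2 : ℤ) = 0 := by
      rw [← Int.cast_abs] at habs
      exact_mod_cast (by exact_mod_cast habs : |((M : ℤ) * n1 - N * m1 - M * n2 + N * m2 : ℤ)| < 1) |> Int.abs_lt_one_iff.mp
    have : (((M : ℤ) * n1 - N * m1 - M * n2 + N * m2 : ℤ) : ℝ) = 0 := by
      exact_mod_cast congrArg Int.cast hz
    linarith [key ▸ this]
end

section
/- If |Δ12(n1,m1)| ≠ |Δ12(n2,m2)| for all pairs of distinct index pairs (n1,m1) ≠ (n2,m2), and Δ12(n,m) ≠ 0 for all n, m, then the union L_C = L⁺_C ∪ L⁻_C of the positive cross-difference set {Mn + ε1(n) - Nm - ε2(m)} and its negation has exactly 2r²MN distinct elements. -/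
/-- if the absolute values of the jitter cross-differences are pairwise
distinct and all nonzero, then `L_C = L⁺_C ∪ L⁻_C` has exactly `2r²MN` distinct elements. -/
theorem stmt4 (M N r : ℕ) (hM : 0 < M) (hN : 0 < N) (hr : 0 < r)
    (hcop : Nat.Coprime M N)
    (ε1 ε2 : ℕ → ℝ)
    (hε1 : ∀ n < r * N, |ε1 n| < 1/4)
    (hε2 : ∀ m < r * M, |ε2 m| < 1/4)
    (habs : ∀ n1 m1 n2 m2, n1 < r * N → n2 < r * N → m1 < r * M → m2 < r * M →
      (n1, m1) ≠ (n2, m2) → |ε2 m1 - ε1 n1| ≠ |ε2 m2 - ε1 n2|)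
    (hne : ∀ n m, n < r * N → m < r * M → ε2 m - ε1 n ≠ 0) :
    let Lplus : Finset ℝ :=
      ((Finset.range (r * N)) ×ˢ (Finset.range (r * M))).image
        (fun p => (M : ℝ) * p.1 + ε1 p.1 - (N : ℝ) * p.2 - ε2 p.2)
    (Lplus ∪ Lplus.image (fun x => -x)).card = 2 * r ^ 2 * M * N := by
  intro Lplus
  have hΔ : ∀ n m, n < r * N → m < r * M → |ε2 m - ε1 n| < 1/2 := by
    intro n m hn hm
    calc |ε2 m - ε1 n| ≤ |ε2 m| + |ε1 n| := abs_sub _ _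
      _ < 1/4 + 1/4 := add_lt_add (hε2 m hm) (hε1 n hn)
      _ = 1/2 := by norm_num
  have intzero : ∀ k : ℤ, |(k : ℝ)| < 1 → k = 0 := by
    intro k hk
    rw [abs_lt] at hk
    have h1 : (-1 : ℤ) < k := by exact_mod_cast hk.1
    have h2 : (k : ℤ) < 1 := by exact_mod_cast hk.2
    omega
  -- injectivity of the defining map
  have key : ∀ p q : ℕ × ℕ, p.1 < r * N → p.2 < r * M → q.1 < r * N → q.2 < r * M →
      (M : ℝ) * p.1 + ε1 p.1 - (N : ℝ) * p.2 - ε2 p.2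
        = (M : ℝ) * q.1 + ε1 q.1 - (N : ℝ) * q.2 - ε2 q.2 → p = q := by
    intro p q hp1 hp2 hq1 hq2 h
    have hk : (((M : ℤ) * p.1 - N * p.2 - (M * q.1 - N * q.2) : ℤ) : ℝ)
        = (ε2 p.2 - ε1 p.1) - (ε2 q.2 - ε1 q.1) := by
      push_cast
      linarith
    have hz : ((M : ℤ) * p.1 - N * p.2 - (M * q.1 - N * q.2) : ℤ) = 0 := by
      apply intzero
      rw [hk]
      calc |(ε2 p.2 - ε1 p.1) - (ε2 q.2 - ε1 q.1)|
          ≤ |ε2 p.2 - ε1 p.1| + |ε2 q.2 - ε1 q.1| := abs_sub _ _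
        _ < 1/2 + 1/2 := add_lt_add (hΔ _ _ hp1 hp2) (hΔ _ _ hq1 hq2)
        _ = 1 := by norm_num
    have hΔeq : ε2 p.2 - ε1 p.1 = ε2 q.2 - ε1 q.1 := by
      rw [hz] at hk
      simp at hk
      linarith
    by_contra hpq
    exact habs p.1 p.2 q.1 q.2 hp1 hq1 hp2 hq2
      (by simpa [Prod.ext_iff, Prod.mk.injEq] using hpq) (by rw [hΔeq])
  have hinj : Set.InjOn (fun p : ℕ × ℕ => (M : ℝ) * p.1 + ε1 p.1 - (N : ℝ) * p.2 - ε2 p.2)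
      (((Finset.range (r * N)) ×ˢ (Finset.range (r * M)) : Finset (ℕ × ℕ)) : Set (ℕ × ℕ)) := by
    intro p hp q hq h
    simp only [Finset.coe_product, Set.mem_prod, Finset.mem_coe, Finset.mem_range] at hp hq
    exact key p q hp.1 hp.2 hq.1 hq.2 h
  have hcard : Lplus.card = r * N * (r * M) := by
    rw [Finset.card_image_of_injOn hinj, Finset.card_product, Finset.card_range,
      Finset.card_range]
  -- disjointness
  have hdisj : Disjoint Lplus (Lplus.image (fun x => -x)) := by
    rw [Finset.disjoint_left]
    intro x hx hx'
    simp only [Lplus, Finset.mem_image, Finset.mem_product, Finset.mem_range] at hx hx'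
    obtain ⟨p, ⟨hp1, hp2⟩, hpx⟩ := hx
    obtain ⟨y, hy, hyx⟩ := hx'
    obtain ⟨q, ⟨hq1, hq2⟩, hqy⟩ := hy
    have h : (M : ℝ) * p.1 + ε1 p.1 - (N : ℝ) * p.2 - ε2 p.2
        = -((M : ℝ) * q.1 + ε1 q.1 - (N : ℝ) * q.2 - ε2 q.2) := by
      rw [hpx, hqy] at *
      linarith [hyx]
    have hk : (((M : ℤ) * p.1 - N * p.2 + (M * q.1 - N * q.2) : ℤ) : ℝ)
        = (ε2 p.2 - ε1 p.1) + (ε2 q.2 - ε1 q.1) := by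
      push_cast
      linarith
    have hz : ((M : ℤ) * p.1 - N * p.2 + (M * q.1 - N * q.2) : ℤ) = 0 := by
      apply intzero
      rw [hk]
      calc |(ε2 p.2 - ε1 p.1) + (ε2 q.2 - ε1 q.1)|
          ≤ |ε2 p.2 - ε1 p.1| + |ε2 q.2 - ε1 q.1| := abs_add_le _ _
        _ < 1/2 + 1/2 := add_lt_add (hΔ _ _ hp1 hp2) (hΔ _ _ hq1 hq2)
        _ = 1 := by norm_num
    have hΔeq : ε2 p.2 - ε1 p.1 = -(ε2 q.2 - ε1 q.1) := by
      rw [hz] at hk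
      simp at hk
      linarith
    have habs' : |ε2 p.2 - ε1 p.1| = |ε2 q.2 - ε1 q.1| := by
      rw [hΔeq, abs_neg]
    have hpq : p = q := by
      by_contra hpq
      exact habs p.1 p.2 q.1 q.2 hp1 hq1 hp2 hq2
        (by simpa [Prod.ext_iff, Prod.mk.injEq] using hpq) habs'
    subst hpq
    have : ε2 p.2 - ε1 p.1 = 0 := by linarith
    exact hne p.1 p.2 hp1 hp2 this
  rw [Finset.card_union_of_disjoint hdisj,
    Finset.card_image_of_injective _ neg_injective, hcard]
  ring
end

section
/- Let M, N be coprime, r ≥ 1, and consider the multiset of ideal cross differences {Mn - Nm : 0 ≤ n ≤ rN-1, 0 ≤ m ≤ rM-1}. For each c with 1 ≤ c ≤ r-1, the value cMN is attained exactly r - c times. -/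
/-- in the ideal cross-difference multiset
`{Mn - Nm : 0 ≤ n ≤ rN-1, 0 ≤ m ≤ rM-1}`, the value `cMN` (for `1 ≤ c ≤ r-1`) is
attained exactly `r - c` times. -/
theorem stmt11 (M N r : ℕ) (hM : 0 < M) (hN : 0 < N) (hr : 0 < r)
    (hcop : Nat.Coprime M N) (c : ℕ) (hc1 : 1 ≤ c) (hc2 : c ≤ r - 1) :
    (((Finset.range (r * N)) ×ˢ (Finset.range (r * M))).filter
      (fun p => (M : ℤ) * p.1 - (N : ℤ) * p.2 = (c : ℤ) * M * N)).card = r - c := by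
  have hkey : (((Finset.range (r * N)) ×ˢ (Finset.range (r * M))).filter
      (fun p => (M : ℤ) * p.1 - (N : ℤ) * p.2 = (c : ℤ) * M * N)) =
      (Finset.range (r - c)).image (fun j => ((c + j) * N, j * M)) := by
    ext p
    simp only [Finset.mem_filter, Finset.mem_product, Finset.mem_image, Finset.mem_range]
    constructor
    · rintro ⟨⟨hn, hm⟩, heq⟩
      have hMm : (M : ℤ) ∣ (N : ℤ) * p.2 := by
        have h : (N : ℤ) * p.2 = (M : ℤ) * p.1 - (c : ℤ) * M * N := by linarith
        rw [h]
        exact ⟨p.1 - c * N, by ring⟩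
      have hMm' : M ∣ N * p.2 := by exact_mod_cast hMm
      have hMdvd : M ∣ p.2 := (Nat.Coprime.dvd_of_dvd_mul_left hcop) hMm'
      obtain ⟨j, hj⟩ := hMdvd
      have hn1 : (M : ℤ) * p.1 = (M : ℤ) * ((c + j) * N) := by
        have h2 : (p.2 : ℤ) = M * j := by exact_mod_cast hj
        rw [h2] at heq
        push_cast
        linarith
      have hM0 : (M : ℤ) ≠ 0 := by exact_mod_cast hM.ne'
      have hp1 : (p.1 : ℤ) = ((c + j) * N : ℤ) := mul_left_cancel₀ hM0 hn1
      have hp1' : p.1 = (c + j) * N := by exact_mod_cast hp1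
      refine ⟨j, ?_, ?_⟩
      · rw [hp1'] at hn
        have : c + j < r := lt_of_mul_lt_mul_right hn (Nat.zero_le N)
        omega
      · have hp2' : p.2 = j * M := by rw [hj, Nat.mul_comm]
        exact (Prod.ext hp1' hp2').symm
    · rintro ⟨j, hjlt, rfl⟩
      have hjc : c + j < r := by omega
      refine ⟨⟨?_, ?_⟩, ?_⟩
      · exact (Nat.mul_lt_mul_right hN).mpr hjc
      · exact (Nat.mul_lt_mul_right hM).mpr (by omega)
      · push_cast; ring
  rw [hkey, Finset.card_image_of_injective _ ?_, Finset.card_range]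
  intro a b hab
  simp only [Prod.mk.injEq] at hab
  exact Nat.eq_of_mul_eq_mul_right hM hab.2
end

section
/- Let M, N be coprime and r ≥ 1. For an integer i with 1 ≤ i ≤ rN-1 and N ∤ i, the number of pairs (n,m), 0 ≤ n ≤ rN-1, 0 ≤ m ≤ rM-1, with Mn - Nm = Mi equals r - ⌊i/N⌋, and the number of pairs with Mn - Nm = -Mi equals r - ⌈i/N⌉. -/
/-- for `1 ≤ i ≤ rN-1` with `N ∤ i`, the number of pairs `(n,m)` with
`Mn - Nm = Mi` equals `r - ⌊i/N⌋`, and the number with `Mn - Nm = -Mi` equals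
`r - ⌈i/N⌉`. -/
theorem stmt12 (M N r : ℕ) (hM : 0 < M) (hN : 0 < N) (hr : 0 < r)
    (hcop : Nat.Coprime M N) (i : ℕ) (hi1 : 1 ≤ i) (hi2 : i ≤ r * N - 1)
    (hnd : ¬ N ∣ i) :
    (((Finset.range (r * N)) ×ˢ (Finset.range (r * M))).filter
      (fun p => (M : ℤ) * p.1 - (N : ℤ) * p.2 = (M : ℤ) * i)).card = r - i / N ∧
    (((Finset.range (r * N)) ×ˢ (Finset.range (r * M))).filter
      (fun p => (M : ℤ) * p.1 - (N : ℤ) * p.2 = -((M : ℤ) * i))).card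
      = r - i ⌈/⌉ N := by
  have hirN : i < r * N := lt_of_le_of_lt hi2 (Nat.sub_lt (Nat.mul_pos hr hN) one_pos)
  have hs0 : 0 < i % N := Nat.pos_of_ne_zero (fun h => hnd (Nat.dvd_of_mod_eq_zero h))
  have hsN : i % N < N := Nat.mod_lt _ hN
  have hdm : N * (i / N) + i % N = i := Nat.div_add_mod i N
  set q := i / N with hq
  have hqlt : q < r := Nat.div_lt_of_lt_mul (by rwa [mul_comm] at hirN)
  clear_value q
  have hiub : i < N * (q + 1) := by nlinarith
  have hilb : N * q < i := by nlinarith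
  have hceil : i ⌈/⌉ N = q + 1 := by
    rw [Nat.ceilDiv_eq_add_pred_div]
    have hexp : N * (q + 1) = N * q + N := by ring
    have h1 : i + N - 1 = (i % N - 1) + N * (q + 1) := by omega
    rw [h1, Nat.add_mul_div_left _ _ hN, Nat.div_eq_of_lt (by omega)]
    omega
  constructor
  · -- first count
    have h1 : (((Finset.range (r * N)) ×ˢ (Finset.range (r * M))).filter
        (fun p => (M : ℤ) * p.1 - (N : ℤ) * p.2 = (M : ℤ) * i))
        = (Finset.range (r - q)).image (fun k => (i + N * k, M * k)) := by
      ext ⟨n, m⟩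
      simp only [Finset.mem_filter, Finset.mem_product, Finset.mem_range, Finset.mem_image,
        Prod.mk.injEq]
      constructor
      · rintro ⟨⟨hn, hm⟩, heq⟩
        have hMeq : (M : ℤ) * ((n : ℤ) - i) = N * m := by linarith
        have hcop' : IsCoprime (N : ℤ) (M : ℤ) :=
          Nat.isCoprime_iff_coprime.mpr hcop.symm
        have hNd : (N : ℤ) ∣ ((n : ℤ) - i) :=
          hcop'.dvd_of_dvd_mul_left ⟨m, by linarith⟩
        obtain ⟨k, hk⟩ := hNd
        have hMz : (0 : ℤ) < M := by exact_mod_cast hM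
        have hNz : (0 : ℤ) < N := by exact_mod_cast hN
        have hm0 : (0 : ℤ) ≤ m := Int.natCast_nonneg m
        have h2 : (M : ℤ) * N * k = N * m := by rw [mul_assoc, ← hk]; exact hMeq
        have hk0 : 0 ≤ k := by
          by_contra h
          push_neg at h
          nlinarith [h2, mul_nonneg hNz.le hm0, mul_pos hMz hNz]
        lift k to ℕ using hk0 with k
        have hnk : n = i + N * k := by exact_mod_cast (by linarith [hk] : (n : ℤ) = i + N * k)
        have hmk : m = M * k := by
          have h3 : (N : ℤ) * ((m : ℤ) - M * k) = 0 := by linarith [h2]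
          rcases mul_eq_zero.mp h3 with h | h
          · exact absurd h hNz.ne'
          · exact_mod_cast (by linarith : (m : ℤ) = M * k)
        refine ⟨k, ?_, hnk.symm, hmk.symm⟩
        have h4 : i + N * k < r * N := by omega
        have h5 : N * (k + q) < N * r := by
          have hc : N * (k + q) = N * k + N * q := by ring
          have hc2 : N * r = r * N := Nat.mul_comm N r
          omega
        have h6 : k + q < r := lt_of_mul_lt_mul_left h5 (Nat.zero_le N)
        omega
      · rintro ⟨k, hk, hnk, hmk⟩
        subst hnk; subst hmk
        refine ⟨⟨?_, ?_⟩, by push_cast; ring⟩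
        · have h4 : k + q + 1 ≤ r := by omega
          calc i + N * k < N * (q + 1) + N * k := by omega
            _ = N * (k + q + 1) := by ring
            _ ≤ N * r := Nat.mul_le_mul_left N h4
            _ = r * N := Nat.mul_comm N r
        · calc M * k < M * r := (Nat.mul_lt_mul_left hM).mpr (by omega)
            _ = r * M := Nat.mul_comm M r
    rw [h1, Finset.card_image_of_injective _ (fun a b hab => by
        simp only [Prod.mk.injEq] at hab
        exact Nat.eq_of_mul_eq_mul_left hM hab.2), Finset.card_range]
  · -- second count
    have h2 : (((Finset.range (r * N)) ×ˢ (Finset.range (r * M))).filter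
        (fun p => (M : ℤ) * p.1 - (N : ℤ) * p.2 = -((M : ℤ) * i)))
        = (Finset.Ico (q + 1) r).image (fun k => (N * k - i, M * k)) := by
      ext ⟨n, m⟩
      simp only [Finset.mem_filter, Finset.mem_product, Finset.mem_range, Finset.mem_image,
        Finset.mem_Ico, Prod.mk.injEq]
      constructor
      · rintro ⟨⟨hn, hm⟩, heq⟩
        have hMeq : M * (n + i) = N * m := by
          have : (M : ℤ) * ((n : ℤ) + i) = N * m := by linarith
          exact_mod_cast this
        have hNd : N ∣ (n + i) := by
          have : N ∣ M * (n + i) := ⟨m, hMeq⟩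
          exact (Nat.Coprime.dvd_of_dvd_mul_left hcop.symm this)
        obtain ⟨k, hk⟩ := hNd
        have hmk : m = M * k := by
          have : N * (M * k) = N * m := by rw [← hMeq, hk]; ring
          exact (Nat.eq_of_mul_eq_mul_left hN this).symm
        have hkq : q + 1 ≤ k := by
          have h5 : N * q < N * k := by omega
          exact (Nat.mul_lt_mul_left hN).mp h5
        have hkr : k < r := by
          have h5 : M * k < M * r := by rw [Nat.mul_comm M r]; omega
          exact (Nat.mul_lt_mul_left hM).mp h5
        exact ⟨k, ⟨hkq, hkr⟩, by omega, hmk.symm⟩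
      · rintro ⟨k, ⟨hkq, hkr⟩, hnk, hmk⟩
        subst hnk; subst hmk
        have hle : i ≤ N * k := by
          have h5 : N * (q + 1) ≤ N * k := Nat.mul_le_mul_left N hkq
          omega
        refine ⟨⟨?_, ?_⟩, ?_⟩
        · have h6 : N * k + N ≤ N * r := by
            calc N * k + N = N * (k + 1) := by ring
              _ ≤ N * r := Nat.mul_le_mul_left N (by omega)
          have h7 : N * r = r * N := Nat.mul_comm N r
          omega
        · calc M * k < M * r := (Nat.mul_lt_mul_left hM).mpr hkr
            _ = r * M := Nat.mul_comm M r
        · have hc : ((N * k - i : ℕ) : ℤ) = (N : ℤ) * k - i := by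
            push_cast [Nat.cast_sub hle]; ring
          show (M : ℤ) * ((N * k - i : ℕ) : ℤ) - (N : ℤ) * ((M * k : ℕ) : ℤ)
              = -((M : ℤ) * i)
          rw [hc]; push_cast; ring
    rw [h2, Finset.card_image_of_injective _ (fun a b hab => by
        simp only [Prod.mk.injEq] at hab
        exact Nat.eq_of_mul_eq_mul_left hM hab.2), Nat.card_Ico, hceil]
end

section
/- Let M, N be coprime and r ≥ 1. For an integer i with 1 ≤ i ≤ rM-1 and M ∤ i, the number of pairs (n,m), 0 ≤ n ≤ rN-1, 0 ≤ m ≤ rM-1, with Nm - Mn = Ni equals r - ⌊i/M⌋, and the number with Nm - Mn = -Ni equals r - ⌈i/M⌉. -/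
private lemma my_mul_lt {k a b : ℕ} (hk : 0 < k) (h : a < b) : k * a < k * b := by
  have h1 : k * (a + 1) ≤ k * b := Nat.mul_le_mul le_rfl h
  have h2 : k * (a + 1) = k * a + k := by rw [Nat.mul_add, Nat.mul_one]
  omega

/-- for `1 ≤ i ≤ rM-1` with `M ∤ i`, the number of pairs `(n,m)` with
`Nm - Mn = Ni` equals `r - ⌊i/M⌋`, and the number with `Nm - Mn = -Ni` equals
`r - ⌈i/M⌉`. -/
theorem stmt13 (M N r : ℕ) (hM : 0 < M) (hN : 0 < N) (hr : 0 < r)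
    (hcop : Nat.Coprime M N) (i : ℕ) (hi1 : 1 ≤ i) (hi2 : i ≤ r * M - 1)
    (hnd : ¬ M ∣ i) :
    (((Finset.range (r * N)) ×ˢ (Finset.range (r * M))).filter
      (fun p => (N : ℤ) * p.2 - (M : ℤ) * p.1 = (N : ℤ) * i)).card = r - i / M ∧
    (((Finset.range (r * N)) ×ˢ (Finset.range (r * M))).filter
      (fun p => (N : ℤ) * p.2 - (M : ℤ) * p.1 = -((N : ℤ) * i))).card
      = r - i ⌈/⌉ M := by
  obtain ⟨q, s, hs0, hsM, hi⟩ : ∃ q s, 0 < s ∧ s < M ∧ i = M * q + s := by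
    refine ⟨i / M, i % M, ?_, Nat.mod_lt _ hM, (Nat.div_add_mod i M).symm⟩
    exact Nat.pos_of_ne_zero fun h => hnd (Nat.dvd_of_mod_eq_zero h)
  have hq : i / M = q := by
    rw [hi, Nat.mul_add_div hM, Nat.div_eq_of_lt hsM]; omega
  have hceil : i ⌈/⌉ M = q + 1 := by
    have h1 : i + M - 1 = M * (q + 1) + (s - 1) := by
      rw [hi, Nat.mul_add, Nat.mul_one]; omega
    rw [Nat.ceilDiv_eq_add_pred_div, h1, Nat.mul_add_div hM,
      Nat.div_eq_of_lt (by omega)]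
  have hiltrM : i < r * M := by omega
  have hqr : q < r := by
    have h2 : M * q < M * r := by
      rw [Nat.mul_comm r M] at hiltrM; omega
    exact Nat.lt_of_mul_lt_mul_left h2
  constructor
  · -- positive lag
    rw [hq]
    have himg : ((Finset.range (r * N)) ×ˢ (Finset.range (r * M))).filter
        (fun p => (N : ℤ) * p.2 - (M : ℤ) * p.1 = (N : ℤ) * i)
        = (Finset.range (r - q)).image (fun t => (N * t, i + M * t)) := by
      ext ⟨n, m⟩
      simp only [Finset.mem_filter, Finset.mem_product, Finset.mem_range,
        Finset.mem_image, Prod.mk.injEq]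
      constructor
      · rintro ⟨⟨hn, hm⟩, heq⟩
        have hnat : N * m = M * n + N * i := by
          have : ((N * m : ℕ) : ℤ) = ((M * n + N * i : ℕ) : ℤ) := by
            push_cast; linarith
          exact_mod_cast this
        have hge : i ≤ m := by
          have h4 : N * i ≤ N * m := by omega
          exact Nat.le_of_mul_le_mul_left h4 hN
        have h5 : N * (m - i) = M * n := by
          rw [Nat.mul_sub]; omega
        have hdvd : N ∣ n := by
          refine (Nat.Coprime.dvd_of_dvd_mul_left hcop.symm ⟨m - i, h5.symm⟩)
        obtain ⟨t, rfl⟩ := hdvd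
        have h6 : m - i = M * t := by
          refine Nat.eq_of_mul_eq_mul_left hN ?_
          rw [h5]; ring
        have hm' : m = i + M * t := by omega
        refine ⟨t, ?_, rfl, hm'.symm⟩
        have h7 : M * (q + t) < M * r := by
          rw [Nat.mul_add]
          rw [Nat.mul_comm r M] at hm
          omega
        have := Nat.lt_of_mul_lt_mul_left h7
        omega
      · rintro ⟨t, ht, rfl, rfl⟩
        have htr : t < r := by omega
        have hfst : N * t < r * N := by
          rw [Nat.mul_comm r N]; exact my_mul_lt hN htr
        have h10 : M * (q + t + 1) ≤ M * r := Nat.mul_le_mul le_rfl (by omega)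
        have h10' : M * (q + t + 1) = M * q + M * t + M := by ring
        have hsnd : i + M * t < r * M := by
          rw [Nat.mul_comm r M]; omega
        exact ⟨⟨hfst, hsnd⟩, by push_cast; ring⟩
    rw [himg, Finset.card_image_of_injective _ ?_, Finset.card_range]
    intro a b h
    exact Nat.eq_of_mul_eq_mul_left hN (congrArg Prod.fst h)
  · -- negative lag
    rw [hceil]
    have himg : ((Finset.range (r * N)) ×ˢ (Finset.range (r * M))).filter
        (fun p => (N : ℤ) * p.2 - (M : ℤ) * p.1 = -((N : ℤ) * i))
        = (Finset.range (r - (q + 1))).image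
            (fun t => (N * (q + 1 + t), M * (q + 1 + t) - i)) := by
      ext ⟨n, m⟩
      simp only [Finset.mem_filter, Finset.mem_product, Finset.mem_range,
        Finset.mem_image, Prod.mk.injEq]
      constructor
      · rintro ⟨⟨hn, hm⟩, heq⟩
        have hnat : N * m + N * i = M * n := by
          have : ((N * m + N * i : ℕ) : ℤ) = ((M * n : ℕ) : ℤ) := by
            push_cast; linarith
          exact_mod_cast this
        have hdvd : N ∣ n := by
          refine Nat.Coprime.dvd_of_dvd_mul_left hcop.symm ⟨m + i, ?_⟩
          rw [Nat.mul_add]; omega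
        obtain ⟨u, rfl⟩ := hdvd
        have h6 : m + i = M * u := by
          refine Nat.eq_of_mul_eq_mul_left hN ?_
          have hr1 : M * (N * u) = N * (M * u) := by ring
          rw [Nat.mul_add]; omega
        have hqu : q < u := by
          refine Nat.lt_of_mul_lt_mul_left (a := M) ?_
          omega
        have hur : u < r := by
          refine Nat.lt_of_mul_lt_mul_left (a := N) ?_
          rw [Nat.mul_comm r N] at hn; omega
        refine ⟨u - (q + 1), by omega, ?_, ?_⟩
        · congr 1; omega
        · have huu : q + 1 + (u - (q + 1)) = u := by omega
          rw [huu]; omega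
      · rintro ⟨t, ht, rfl, rfl⟩
        have hur : q + 1 + t < r := by omega
        have hfst : N * (q + 1 + t) < r * N := by
          rw [Nat.mul_comm r N]; exact my_mul_lt hN hur
        have hMu : M * (q + 1 + t) < M * r := my_mul_lt hM hur
        have hle : i ≤ M * (q + 1 + t) := by
          have h11 : M * (q + 1 + t) = M * q + M + M * t := by ring
          omega
        have hsnd : M * (q + 1 + t) - i < r * M := by
          rw [Nat.mul_comm r M]; omega
        refine ⟨⟨hfst, hsnd⟩, ?_⟩
        push_cast [hle]
        ring
    rw [himg, Finset.card_image_of_injective _ ?_, Finset.card_range]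
    intro a b h
    have := Nat.eq_of_mul_eq_mul_left hN (congrArg Prod.fst h)
    omega
end

section
/- In the jitter-perturbed non-blind co-prime sampler with r periods, under the assumption that all jitter cross-differences Δ12(cN, cM) for 0 ≤ c ≤ r-1 are pairwise distinct and all self-difference jitter values at coinciding ideal instants differ, the number of sample-pair contributors whose difference rounds to lag l = 0 equals rM + rN + r. -/
lemma self_count (K B : ℕ) (ε : ℕ → ℝ) (hK : 0 < K) (hε : ∀ i < B, |ε i| < 1/4) :
    (((Finset.range B) ×ˢ (Finset.range B)).filter
        (fun p => -(1/2 : ℝ) ≤ (K : ℝ) * ((p.1 : ℝ) - p.2) + (ε p.1 - ε p.2) ∧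
          (K : ℝ) * ((p.1 : ℝ) - p.2) + (ε p.1 - ε p.2) < 1/2)).card = B := by
  have hset : (((Finset.range B) ×ˢ (Finset.range B)).filter
        (fun p => -(1/2 : ℝ) ≤ (K : ℝ) * ((p.1 : ℝ) - p.2) + (ε p.1 - ε p.2) ∧
          (K : ℝ) * ((p.1 : ℝ) - p.2) + (ε p.1 - ε p.2) < 1/2))
      = (Finset.range B).image (fun i => (i, i)) := by
    ext ⟨a, b⟩
    simp only [Finset.mem_filter, Finset.mem_product, Finset.mem_image, Finset.mem_range,
      Prod.mk.injEq]
    constructor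
    · rintro ⟨⟨h1, h2⟩, hc1, hc2⟩
      refine ⟨a, h1, rfl, ?_⟩
      have e1 := abs_lt.mp (hε a h1)
      have e2 := abs_lt.mp (hε b h2)
      have hKR : (1:ℝ) ≤ K := by exact_mod_cast hK
      by_contra hne
      rcases Nat.lt_or_ge a b with h | h
      · have hab : (a:ℝ) - b ≤ -1 := by
          have : (a:ℝ) + 1 ≤ b := by exact_mod_cast h
          linarith
        have := mul_le_mul_of_nonneg_left hab (by positivity : (0:ℝ) ≤ K)
        nlinarith
      · have h' : b < a := lt_of_le_of_ne h fun e => hne e.symm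
        have hab : (1:ℝ) ≤ (a:ℝ) - b := by
          have : (b:ℝ) + 1 ≤ a := by exact_mod_cast h'
          linarith
        have := mul_le_mul_of_nonneg_left hab (by positivity : (0:ℝ) ≤ K)
        nlinarith
    · rintro ⟨i, hi, rfl, rfl⟩
      constructor
      · exact ⟨hi, hi⟩
      · norm_num
  rw [hset, Finset.card_image_of_injective _ (fun x y h => (Prod.mk.injEq _ _ _ _).mp h |>.1),
    Finset.card_range]

/-- in the jitter-perturbed non-blind co-prime sampler with `r` periods,
if the jitter cross-differences `Δ₁₂(cN, cM)`, `0 ≤ c ≤ r-1`, are pairwise distinct and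
the self-difference jitter values at coinciding ideal instants differ, then the number of
sample-pair contributors whose perturbed difference lies in `[-1/2, 1/2)` (i.e. rounds to
lag `l = 0`) equals `rM + rN + r`: `rN` from the first sampler's self pairs, `rM` from the
second sampler's self pairs, and `r` from the cross pairs `(cN, cM)`. -/
theorem stmt16 (M N r : ℕ) (hM : 0 < M) (hN : 0 < N) (hr : 0 < r)
    (hcop : Nat.Coprime M N)
    (ε1 ε2 : ℕ → ℝ)
    (hε1 : ∀ n < r * N, |ε1 n| < 1/4)
    (hε2 : ∀ m < r * M, |ε2 m| < 1/4)
    (hΔ12 : ∀ c1 c2, c1 < r → c2 < r → c1 ≠ c2 →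
      ε2 (c1 * M) - ε1 (c1 * N) ≠ ε2 (c2 * M) - ε1 (c2 * N))
    (hself : ∀ c < r, ε1 (c * N) ≠ ε2 (c * M)) :
    ((((Finset.range (r * N)) ×ˢ (Finset.range (r * N))).filter
        (fun p => -(1/2 : ℝ) ≤ (M : ℝ) * ((p.1 : ℝ) - p.2) + (ε1 p.1 - ε1 p.2) ∧
          (M : ℝ) * ((p.1 : ℝ) - p.2) + (ε1 p.1 - ε1 p.2) < 1/2)).card
     + (((Finset.range (r * M)) ×ˢ (Finset.range (r * M))).filter
        (fun p => -(1/2 : ℝ) ≤ (N : ℝ) * ((p.1 : ℝ) - p.2) + (ε2 p.1 - ε2 p.2) ∧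
          (N : ℝ) * ((p.1 : ℝ) - p.2) + (ε2 p.1 - ε2 p.2) < 1/2)).card
     + (((Finset.range (r * N)) ×ˢ (Finset.range (r * M))).filter
        (fun p => -(1/2 : ℝ) ≤ (M : ℝ) * p.1 + ε1 p.1 - (N : ℝ) * p.2 - ε2 p.2 ∧
          (M : ℝ) * p.1 + ε1 p.1 - (N : ℝ) * p.2 - ε2 p.2 < 1/2)).card)
    = r * M + r * N + r := by
  have c1 := self_count M (r * N) ε1 hM hε1
  have c2 := self_count N (r * M) ε2 hN hε2
  have c3 : (((Finset.range (r * N)) ×ˢ (Finset.range (r * M))).filter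
        (fun p => -(1/2 : ℝ) ≤ (M : ℝ) * p.1 + ε1 p.1 - (N : ℝ) * p.2 - ε2 p.2 ∧
          (M : ℝ) * p.1 + ε1 p.1 - (N : ℝ) * p.2 - ε2 p.2 < 1/2)).card = r := by
    have hset : (((Finset.range (r * N)) ×ˢ (Finset.range (r * M))).filter
        (fun p => -(1/2 : ℝ) ≤ (M : ℝ) * p.1 + ε1 p.1 - (N : ℝ) * p.2 - ε2 p.2 ∧
          (M : ℝ) * p.1 + ε1 p.1 - (N : ℝ) * p.2 - ε2 p.2 < 1/2))
        = (Finset.range r).image (fun c => (c * N, c * M)) := by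
      ext ⟨a, b⟩
      simp only [Finset.mem_filter, Finset.mem_product, Finset.mem_image, Finset.mem_range,
        Prod.mk.injEq]
      constructor
      · rintro ⟨⟨h1, h2⟩, hc1, hc2⟩
        have e1 := abs_lt.mp (hε1 a h1)
        have e2 := abs_lt.mp (hε2 b h2)
        have heq : M * a = N * b := by
          by_contra hne
          rcases Nat.lt_or_ge (M * a) (N * b) with h | h
          · have hab : (M:ℝ) * a + 1 ≤ (N:ℝ) * b := by exact_mod_cast h
            linarith
          · have h' : N * b < M * a := lt_of_le_of_ne h fun e => hne e.symm
            have hab : (N:ℝ) * b + 1 ≤ (M:ℝ) * a := by exact_mod_cast h'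
            linarith
        have hNdvd : N ∣ a := (hcop.symm).dvd_of_dvd_mul_left ⟨b, heq⟩
        obtain ⟨c, rfl⟩ := hNdvd
        have hb : b = c * M := by
          have : N * (M * c) = N * b := by rw [← heq]; ring
          have h := Nat.eq_of_mul_eq_mul_left hN this
          rw [← h, Nat.mul_comm]
        have hcr : c < r := by
          by_contra h
          push_neg at h
          have h2 : r * N ≤ N * c := by
            calc r * N ≤ c * N := Nat.mul_le_mul_right N h
            _ = N * c := Nat.mul_comm c N
          omega
        exact ⟨c, hcr, by rw [Nat.mul_comm], hb.symm⟩
      · rintro ⟨c, hc, rfl, rfl⟩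
        have h1 : c * N < r * N := (Nat.mul_lt_mul_right hN).mpr hc
        have h2 : c * M < r * M := (Nat.mul_lt_mul_right hM).mpr hc
        refine ⟨⟨h1, h2⟩, ?_, ?_⟩
        · have e1 := abs_lt.mp (hε1 (c * N) h1)
          have e2 := abs_lt.mp (hε2 (c * M) h2)
          have : (M:ℝ) * (c * N) = (N:ℝ) * (c * M) := by push_cast; ring
          push_cast at this ⊢
          linarith
        · have e1 := abs_lt.mp (hε1 (c * N) h1)
          have e2 := abs_lt.mp (hε2 (c * M) h2)
          have : (M:ℝ) * (c * N) = (N:ℝ) * (c * M) := by push_cast; ring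
          push_cast at this ⊢
          linarith
    rw [hset, Finset.card_image_of_injective, Finset.card_range]
    intro x y h
    have := (Prod.mk.injEq _ _ _ _).mp h |>.1
    exact Nat.eq_of_mul_eq_mul_right hN this
  rw [c1, c2, c3]
  ring
end
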